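/- arXiv:1910.02263 — 3 statements merged into one kernel-verified Lean document; each statement's English description precedes it below -/
import Mathlib

section
/- If a is an element of a unital C*-algebra A with a² = 0, then for every b∈A, Birkhoff–James orthogonality a ⊥_B b implies numerical radius Birkhoff–James orthogonality a ⊥_B^v b. -/
/-!
If `a ^ 2 = 0`, then for a state `φ`, after rotating `a` by a unimodular scalar so that `φ a ≥ 0`,
`|φ a| = φ (ℜ a) ≤ ‖ℜ a‖`, and `4 ‖ℜ a‖ ^ 2 = ‖a * star a + star a * a‖ ≤ ‖a‖ ^ 2` because
`a * star a` and `star a * a` are orthogonal positive elements; so `v(a) ≤ ‖a‖ / 2`. Conversely,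
`‖x‖ ≤ ‖ℜ x‖ + ‖ℑ x‖ ≤ 2 v(x)` for every `x`, since the norm of a self-adjoint element is attained
by a state: a Hahn–Banach extension of a character of the C⋆-algebra it generates. Hence
`v(a) ≤ ‖a‖ / 2 ≤ ‖a + λ b‖ / 2 ≤ v(a + λ b)`.
-/

open scoped ComplexOrder

/-- A state on a unital C*-algebra: a positive linear functional with `φ 1 = 1` and norm 1. -/
def IsState (A : Type*) [CStarAlgebra A] (φ : A →L[ℂ] ℂ) : Prop :=
  (∀ a : A, 0 ≤ φ (star a * a)) ∧ φ 1 = 1 ∧ ‖φ‖ = 1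

/-- The numerical radius `v(a) = sup {|φ(a)| : φ a state}`. -/
noncomputable def nr {A : Type*} [CStarAlgebra A] (a : A) : ℝ :=
  sSup {r : ℝ | ∃ φ : A →L[ℂ] ℂ, IsState A φ ∧ r = ‖φ a‖}

/-- The numerical radius Crawford number `C(b) = inf {|φ(b)| : φ a state}`. -/
noncomputable def crawford {A : Type*} [CStarAlgebra A] (b : A) : ℝ :=
  sInf {r : ℝ | ∃ φ : A →L[ℂ] ℂ, IsState A φ ∧ r = ‖φ b‖}

/-- Numerical radius Birkhoff--James orthogonality: `v(a + λ b) ≥ v(a)` for all `λ ∈ ℂ`. -/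
def nrOrth {A : Type*} [CStarAlgebra A] (a b : A) : Prop :=
  ∀ lam : ℂ, nr a ≤ nr (a + lam • b)

/-- Birkhoff--James orthogonality: `‖a + λ b‖ ≥ ‖a‖` for all `λ ∈ ℂ`. -/
def bjOrth {A : Type*} [CStarAlgebra A] (a b : A) : Prop :=
  ∀ lam : ℂ, ‖a‖ ≤ ‖a + lam • b‖

variable {A : Type*} [CStarAlgebra A]

open ComplexStarModule Complex

theorem norm_mul_star_add_star_mul_le_of_sq_eq_zero {a : A} (ha : a ^ 2 = 0) :
    ‖a * star a + star a * a‖ ≤ ‖a‖ ^ 2 := by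
  let _ := CStarAlgebra.spectralOrder A
  let _ := CStarAlgebra.spectralOrderedRing A
  set p := a * star a
  set q := star a * a
  have haa : a * a = 0 := by rw [← sq, ha]
  have hpq : p * q = 0 := by
    rw [mul_assoc, ← mul_assoc (star a), ← star_mul, haa, star_zero, zero_mul, mul_zero]
  have hqp : q * p = 0 := by
    rw [mul_assoc, ← mul_assoc a, haa, zero_mul, mul_zero]
  have hp : p * p ≤ ‖a‖ ^ 2 • p := by
    calc p * p = a * q * star a := by simp only [p, q, mul_assoc]
      _ ≤ ‖q‖ • p := CStarAlgebra.star_right_conjugate_le_norm_smul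
      _ = ‖a‖ ^ 2 • p := by rw [CStarRing.norm_star_mul_self, sq]
  have hq : q * q ≤ ‖a‖ ^ 2 • q := by
    calc q * q = star a * p * a := by simp only [p, q, mul_assoc]
      _ ≤ ‖p‖ • q := CStarAlgebra.star_left_conjugate_le_norm_smul
      _ = ‖a‖ ^ 2 • q := by rw [CStarRing.norm_self_mul_star, sq]
  have hs : IsSelfAdjoint (p + q) :=
    (IsSelfAdjoint.mul_star_self a).add (IsSelfAdjoint.star_mul_self a)
  have hss : (p + q) * (p + q) ≤ ‖a‖ ^ 2 • (p + q) := by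
    calc (p + q) * (p + q) = p * p + q * q := by
          rw [add_mul, mul_add, mul_add, hpq, hqp, add_zero, zero_add]
      _ ≤ ‖a‖ ^ 2 • (p + q) := by rw [smul_add]; exact add_le_add hp hq
  have key : ‖p + q‖ ^ 2 ≤ ‖a‖ ^ 2 * ‖p + q‖ := by
    calc ‖p + q‖ ^ 2 = ‖(p + q) * (p + q)‖ := hs.norm_mul_self.symm
      _ ≤ ‖‖a‖ ^ 2 • (p + q)‖ := CStarAlgebra.norm_le_norm_of_nonneg_of_le hs.mul_self_nonneg hss
      _ = ‖a‖ ^ 2 * ‖p + q‖ := by rw [norm_smul, Real.norm_of_nonneg (by positivity)]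
  rcases (norm_nonneg (p + q)).eq_or_lt with h0 | h0
  · rw [← h0]; positivity
  · exact le_of_mul_le_mul_right (by rwa [sq] at key) h0

theorem norm_add_star_le_of_sq_eq_zero {a : A} (ha : a ^ 2 = 0) : ‖a + star a‖ ≤ ‖a‖ := by
  have haa : a * a = 0 := by rw [← sq, ha]
  have hsq : (a + star a) * (a + star a) = a * star a + star a * a := by
    rw [add_mul, mul_add, mul_add, haa, ← star_mul, haa, star_zero]
    abel
  have h := norm_mul_star_add_star_mul_le_of_sq_eq_zero ha
  rw [← hsq, (IsSelfAdjoint.add_star_self a).norm_mul_self] at h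
  exact (pow_le_pow_iff_left₀ (norm_nonneg _) (norm_nonneg _) two_ne_zero).mp h

theorem norm_realPart_le_of_sq_eq_zero {a : A} (ha : a ^ 2 = 0) : ‖(ℜ a : A)‖ ≤ ‖a‖ / 2 := by
  rw [realPart_apply_coe, norm_smul, norm_inv, Real.norm_ofNat, inv_mul_eq_div]
  exact div_le_div_of_nonneg_right (norm_add_star_le_of_sq_eq_zero ha) zero_le_two

theorem IsSelfAdjoint.norm_add_smul_one_sq_le [Nontrivial A] {k : A} (hk : IsSelfAdjoint k)
    (t : ℝ) :
    ‖k + ((t : ℂ) * I) • (1 : A)‖ ^ 2 ≤ ‖k‖ ^ 2 + t ^ 2 := by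
  have hstar : star (k + ((t : ℂ) * I) • (1 : A)) * (k + ((t : ℂ) * I) • 1)
      = k * k + (t ^ 2 : ℝ) • (1 : A) := by
    have ht : ((t : ℂ) * I) * ((t : ℂ) * -I) = ((t ^ 2 : ℝ) : ℂ) := by
      push_cast; ring_nf; rw [I_sq]; ring
    simp only [star_add, star_smul, hk.star_eq, star_one, star_def, map_mul, conj_ofReal, conj_I,
      add_mul, mul_add, smul_mul_assoc, mul_smul_comm, one_mul, mul_one]
    rw [← Complex.coe_smul, ← ht]
    module
  rw [sq, ← CStarRing.norm_star_mul_self, hstar]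
  calc ‖k * k + (t ^ 2 : ℝ) • (1 : A)‖ ≤ ‖k * k‖ + ‖(t ^ 2 : ℝ) • (1 : A)‖ := norm_add_le _ _
    _ ≤ ‖k‖ ^ 2 + t ^ 2 := by
      gcongr
      · rw [sq]; exact norm_mul_le _ _
      · rw [norm_smul, Real.norm_of_nonneg (sq_nonneg t), norm_one, mul_one]

section UnitalContraction

variable {g : A →L[ℂ] ℂ}

theorem nontrivial_of_map_one (hg1 : g 1 = 1) : Nontrivial A :=
  nontrivial_of_ne 1 0 fun h ↦ by simp [h] at hg1

theorem norm_apply_le_of_opNorm_le_one (hg : ‖g‖ ≤ 1) (x : A) : ‖g x‖ ≤ ‖x‖ :=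
  (g.le_of_opNorm_le hg x).trans_eq (one_mul _)

theorem im_apply_eq_zero_of_isSelfAdjoint (hg : ‖g‖ ≤ 1) (hg1 : g 1 = 1) {k : A}
    (hk : IsSelfAdjoint k) : (g k).im = 0 := by
  have := nontrivial_of_map_one hg1
  have key (t : ℝ) : (g k).re ^ 2 + ((g k).im + t) ^ 2 ≤ ‖k‖ ^ 2 + t ^ 2 := by
    calc (g k).re ^ 2 + ((g k).im + t) ^ 2 = ‖g (k + ((t : ℂ) * I) • (1 : A))‖ ^ 2 := by
          rw [map_add, map_smul, hg1, smul_eq_mul, mul_one, Complex.sq_norm, normSq_apply]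
          simp only [add_re, add_im, mul_re, mul_im, ofReal_re, ofReal_im, I_re, I_im]
          ring
      _ ≤ ‖k + ((t : ℂ) * I) • (1 : A)‖ ^ 2 := by
            gcongr; exact norm_apply_le_of_opNorm_le_one hg _
      _ ≤ ‖k‖ ^ 2 + t ^ 2 := hk.norm_add_smul_one_sq_le t
  by_contra hne
  set t := (‖k‖ ^ 2 + 1) / (2 * (g k).im)
  have ht : 2 * (g k).im * t = ‖k‖ ^ 2 + 1 := by simp only [t]; field_simp
  nlinarith [key t, sq_nonneg (g k).re, sq_nonneg (g k).im]

theorem apply_star_mul_self_nonneg (hg : ‖g‖ ≤ 1) (hg1 : g 1 = 1) (x : A) :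
    0 ≤ g (star x * x) := by
  let _ := CStarAlgebra.spectralOrder A
  let _ := CStarAlgebra.spectralOrderedRing A
  set p := star x * x
  set r := ‖p‖
  have hp : 0 ≤ p := star_mul_self_nonneg x
  have hrp : ‖algebraMap ℝ A r - p‖ ≤ r :=
    (CStarAlgebra.norm_le_iff_le_algebraMap _ (norm_nonneg p)
      (sub_nonneg.mpr (IsSelfAdjoint.of_nonneg hp).le_algebraMap_norm_self)).mpr (sub_le_self _ hp)
  have hgr : g (algebraMap ℝ A r) = r := by
    rw [Algebra.algebraMap_eq_smul_one, ← Complex.coe_smul, map_smul, hg1, smul_eq_mul, mul_one]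
  have hdist : ‖(r : ℂ) - g p‖ ≤ r :=
    calc ‖(r : ℂ) - g p‖ = ‖g (algebraMap ℝ A r - p)‖ := by rw [map_sub, hgr]
      _ ≤ ‖algebraMap ℝ A r - p‖ := norm_apply_le_of_opNorm_le_one hg _
      _ ≤ r := hrp
  -- `g p` is a real number within distance `‖p‖` of `‖p‖`
  have hre := (abs_le.mp ((Complex.abs_re_le_norm _).trans hdist)).2
  rw [sub_re, ofReal_re] at hre
  exact Complex.nonneg_iff.mpr
    ⟨by linarith, (im_apply_eq_zero_of_isSelfAdjoint hg hg1 (.star_mul_self x)).symm⟩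

theorem isState_of_norm_le_one (hg : ‖g‖ ≤ 1) (hg1 : g 1 = 1) : IsState A g := by
  have := nontrivial_of_map_one hg1
  refine ⟨apply_star_mul_self_nonneg hg hg1, hg1, hg.antisymm ?_⟩
  simpa [hg1] using g.le_opNorm 1

end UnitalContraction

theorem ContinuousLinearMap.apply_eq_realPart_add_I_mul_imaginaryPart (g : A →L[ℂ] ℂ) (x : A) :
    g x = g (ℜ x) + I * g (ℑ x) := by
  rw [← smul_eq_mul, ← map_smul, ← map_add, realPart_add_I_smul_imaginaryPart]

namespace IsState

variable {φ : A →L[ℂ] ℂ}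

theorem norm_apply_le (hφ : IsState A φ) (x : A) : ‖φ x‖ ≤ ‖x‖ :=
  norm_apply_le_of_opNorm_le_one hφ.2.2.le x

theorem im_apply_eq_zero (hφ : IsState A φ) {k : A} (hk : IsSelfAdjoint k) : (φ k).im = 0 :=
  im_apply_eq_zero_of_isSelfAdjoint hφ.2.2.le hφ.2.1 hk

theorem apply_realPart (hφ : IsState A φ) (x : A) : φ (ℜ x) = (φ x).re := by
  apply Complex.ext <;>
    simp [φ.apply_eq_realPart_add_I_mul_imaginaryPart x, hφ.im_apply_eq_zero (ℜ x).prop,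
      hφ.im_apply_eq_zero (ℑ x).prop]

theorem apply_imaginaryPart (hφ : IsState A φ) (x : A) : φ (ℑ x) = (φ x).im := by
  apply Complex.ext <;>
    simp [φ.apply_eq_realPart_add_I_mul_imaginaryPart x, hφ.im_apply_eq_zero (ℜ x).prop,
      hφ.im_apply_eq_zero (ℑ x).prop]

theorem norm_apply_le_half_norm_of_sq_eq_zero (hφ : IsState A φ) {a : A} (ha : a ^ 2 = 0) :
    ‖φ a‖ ≤ ‖a‖ / 2 := by
  set c : ℂ := exp (↑(-arg (φ a)) * I)
  have hc : ‖c‖ = 1 := norm_exp_ofReal_mul_I _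
  have hca : φ (c • a) = ‖φ a‖ := by
    rw [map_smul, smul_eq_mul, ← norm_mul_exp_arg_mul_I (φ a), mul_left_comm, ← exp_add]
    simp
  calc ‖φ a‖ = (φ (ℜ (c • a))).re := by rw [hφ.apply_realPart, hca, ofReal_re, ofReal_re]
    _ ≤ ‖φ (ℜ (c • a))‖ := re_le_norm _
    _ ≤ ‖(ℜ (c • a) : A)‖ := hφ.norm_apply_le _
    _ ≤ ‖c • a‖ / 2 := norm_realPart_le_of_sq_eq_zero (by rw [smul_pow, ha, smul_zero])
    _ = ‖a‖ / 2 := by rw [norm_smul, hc, one_mul]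

theorem norm_apply_le_nr (hφ : IsState A φ) (x : A) : ‖φ x‖ ≤ nr x :=
  le_csSup ⟨‖x‖, by rintro _ ⟨ψ, hψ, rfl⟩; exact hψ.norm_apply_le x⟩ ⟨φ, hφ, rfl⟩

end IsState

theorem nr_le_half_norm_of_sq_eq_zero {a : A} (ha : a ^ 2 = 0) : nr a ≤ ‖a‖ / 2 :=
  Real.sSup_le (by rintro _ ⟨φ, hφ, rfl⟩; exact hφ.norm_apply_le_half_norm_of_sq_eq_zero ha)
    (by positivity)

theorem exists_apply_eq_of_mem_spectrum {k : A} [IsStarNormal k] {z : ℂ}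
    (hz : z ∈ spectrum ℂ k) : ∃ g : A →L[ℂ] ℂ, ‖g‖ ≤ 1 ∧ g 1 = 1 ∧ g k = z := by
  have : Nontrivial A := by
    by_contra h
    rw [not_nontrivial_iff_subsingleton] at h
    simp [spectrum.of_subsingleton] at hz
  let B := StarAlgebra.elemental ℂ k
  have : IsClosed (B : Set A) := StarAlgebra.elemental.isClosed ℂ k
  let kB : B := ⟨k, StarAlgebra.elemental.self_mem ℂ k⟩
  obtain ⟨χ, hχ⟩ : ∃ χ : WeakDual.characterSpace ℂ B, χ kB = z :=
    WeakDual.CharacterSpace.mem_spectrum_iff_exists.mp (by rwa [StarSubalgebra.spectrum_eq])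
  let p : Submodule ℂ A := Subalgebra.toSubmodule B.toSubalgebra
  let f₀ : p →ₗ[ℂ] ℂ :=
    (χ : WeakDual ℂ B).toLinearMap ∘ₗ (Subalgebra.toSubmoduleEquiv _).toLinearMap
  have hf₀ (y : p) : ‖f₀ y‖ ≤ 1 * ‖y‖ := by
    have hmem := AlgHom.apply_mem_spectrum χ (B.toSubmoduleEquiv y)
    rw [StarSubalgebra.spectrum_eq] at hmem
    exact (one_mul ‖y‖).symm ▸ spectrum.norm_le_norm_of_mem hmem
  obtain ⟨g, hgf, hg⟩ := exists_extension_norm_eq p (f₀.mkContinuous 1 hf₀)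
  refine ⟨g, hg ▸ f₀.mkContinuous_norm_le zero_le_one hf₀, ?_, ?_⟩
  · exact (hgf ⟨1, one_mem B⟩).trans (map_one χ)
  · exact (hgf ⟨k, StarAlgebra.elemental.self_mem ℂ k⟩).trans hχ

theorem exists_isState_norm_apply_eq [Nontrivial A] (k : A) [IsStarNormal k] :
    ∃ φ : A →L[ℂ] ℂ, IsState A φ ∧ ‖φ k‖ = ‖k‖ := by
  obtain ⟨z, hz, hzk⟩ := spectrum.exists_nnnorm_eq_spectralRadius k
  rw [IsStarNormal.spectralRadius_eq_nnnorm, ENNReal.coe_inj] at hzk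
  obtain ⟨g, hg, hg1, hgk⟩ := exists_apply_eq_of_mem_spectrum hz
  exact ⟨g, isState_of_norm_le_one hg hg1, by rw [hgk]; exact congrArg NNReal.toReal hzk⟩

theorem norm_le_nr_of_forall_isState [Nontrivial A] {k x : A} [IsStarNormal k]
    (h : ∀ φ : A →L[ℂ] ℂ, IsState A φ → ‖φ k‖ ≤ ‖φ x‖) : ‖k‖ ≤ nr x := by
  obtain ⟨φ, hφ, hφk⟩ := exists_isState_norm_apply_eq k
  exact hφk ▸ (h φ hφ).trans (hφ.norm_apply_le_nr x)

theorem half_norm_le_nr [Nontrivial A] (x : A) : ‖x‖ / 2 ≤ nr x := by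
  have hre : ‖(ℜ x : A)‖ ≤ nr x := norm_le_nr_of_forall_isState fun φ hφ ↦ by
    rw [hφ.apply_realPart, norm_real, Real.norm_eq_abs]
    exact abs_re_le_norm _
  have him : ‖(ℑ x : A)‖ ≤ nr x := norm_le_nr_of_forall_isState fun φ hφ ↦ by
    rw [hφ.apply_imaginaryPart, norm_real, Real.norm_eq_abs]
    exact abs_im_le_norm _
  have hx : ‖x‖ ≤ ‖(ℜ x : A)‖ + ‖(ℑ x : A)‖ :=
    calc ‖x‖ = ‖(ℜ x : A) + I • (ℑ x : A)‖ := by rw [realPart_add_I_smul_imaginaryPart]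
      _ ≤ ‖(ℜ x : A)‖ + ‖(ℑ x : A)‖ := by
        grw [norm_add_le, norm_smul, norm_I, one_mul]
  linarith

theorem stmt3 (a b : A) (ha : a ^ 2 = 0) (h : bjOrth a b) : nrOrth a b := by
  intro lam
  rcases subsingleton_or_nontrivial A with _ | _
  · rw [Subsingleton.elim (a + lam • b) a]
  calc nr a ≤ ‖a‖ / 2 := nr_le_half_norm_of_sq_eq_zero ha
    _ ≤ ‖a + lam • b‖ / 2 := by gcongr; exact h lam
    _ ≤ nr (a + lam • b) := half_norm_le_nr _
end

section
/- Let a, b be self-adjoint elements of a unital C*-algebra A. Then a ⊥_B^v b if and only if v(a + rb) ≥ v(a) for all real r. -/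
open scoped ComplexOrder

variable {A : Type*} [CStarAlgebra A]


/-! On a self-adjoint element every state takes a real value, so for self-adjoint `a`, `b` the
number `φ (a + λ • b)` has real part `φ (a + (Re λ) • b)`. Hence
`|φ (a + (Re λ) • b)| ≤ |φ (a + λ • b)|` for every state, i.e. `v(a + (Re λ) b) ≤ v(a + λ b)`,
and real scalars already witness any failure of orthogonality. -/

lemma im_map_eq_zero_of_isSelfAdjoint {R F : Type*} [Ring R] [StarRing R] [FunLike F R ℂ]
    [AddMonoidHomClass F R ℂ] {φ : F} (hφ : ∀ x, 0 ≤ φ (star x * x)) {c : R}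
    (hc : IsSelfAdjoint c) : (φ c).im = 0 := by
  have him (x : R) : (φ (star x * x)).im = 0 := (Complex.nonneg_iff.1 (hφ x)).2.symm
  have hexp : star (1 + c) * (1 + c) = star 1 * 1 + c + c + star c * c := by
    rw [star_add, star_one, hc.star_eq]
    noncomm_ring
  have h := him (1 + c)
  rw [hexp, map_add, map_add, map_add] at h
  simp only [Complex.add_im, him 1, him c] at h
  linarith

lemma Complex.norm_add_re_mul_le {x y : ℂ} (hx : x.im = 0) (hy : y.im = 0) (z : ℂ) :
    ‖x + z.re * y‖ ≤ ‖x + z * y‖ := by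
  have hre : x + z.re * y = ((x + z * y).re : ℂ) := by
    apply Complex.ext <;> simp [hx, hy]
  rw [hre, Complex.norm_real, Real.norm_eq_abs]
  exact Complex.abs_re_le_norm _

lemma norm_apply_le_nr {φ : A →L[ℂ] ℂ} (hφ : IsState A φ) (x : A) : ‖φ x‖ ≤ nr x := by
  refine le_csSup ⟨‖x‖, ?_⟩ ⟨φ, hφ, rfl⟩
  rintro r ⟨ψ, ⟨-, -, hψ⟩, rfl⟩
  simpa [hψ] using ψ.le_opNorm x

lemma nr_le_nr_of_forall_isState {x y : A}
    (h : ∀ φ : A →L[ℂ] ℂ, IsState A φ → ‖φ x‖ ≤ ‖φ y‖) : nr x ≤ nr y := by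
  refine Real.sSup_le ?_ (Real.sSup_nonneg ?_)
  · rintro r ⟨φ, hφ, rfl⟩
    exact (h φ hφ).trans (norm_apply_le_nr hφ y)
  · rintro r ⟨φ, -, rfl⟩
    exact norm_nonneg _

lemma nr_add_re_smul_le {a b : A} (ha : IsSelfAdjoint a) (hb : IsSelfAdjoint b) (z : ℂ) :
    nr (a + (z.re : ℂ) • b) ≤ nr (a + z • b) := by
  refine nr_le_nr_of_forall_isState fun φ hφ => ?_
  simpa only [map_add, map_smul, smul_eq_mul] using
    Complex.norm_add_re_mul_le (im_map_eq_zero_of_isSelfAdjoint hφ.1 ha)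
      (im_map_eq_zero_of_isSelfAdjoint hφ.1 hb) z

theorem stmt7 (a b : A) (ha : IsSelfAdjoint a) (hb : IsSelfAdjoint b) :
    nrOrth a b ↔ ∀ r : ℝ, nr a ≤ nr (a + (r : ℂ) • b) :=
  ⟨fun h r => h r, fun h z => (h z.re).trans (nr_add_re_smul_le ha hb z)⟩
end

section
/- Let a, b be nonzero elements of a unital C*-algebra A. Then the right Gateaux derivative of the numerical radius norm satisfies ρ₊^v(a,b) = max{ Re(conj(φ(a))·φ(b)) : φ a state on A with |φ(a)| = v(a) }, and the maximum is attained. -/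
/-!
A unital functional of norm one on a C*-algebra is positive, so the states form a weak-* closed
subset of the unit ball, hence a compact set; thus `v(x)` is attained at a state for every `x`.
For a state `φ`, `|φ(a) + tφ(b)|² = |φ(a)|² + 2t Re(conj φ(a) φ(b)) + t²|φ(b)|²`. A state `φ₀`
maximizing `Re(conj φ(a) φ(b))` among the states with `|φ(a)| = v(a)` bounds the difference
quotient from below by that maximum. A state `φₜ` attaining `v(a + tb)` bounds it from above by
`Re(conj φₜ(a) φₜ(b)) + O(t)`, and since `|φₜ(a)| ≥ v(a) - 2t‖b‖`, compactness of the state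
space forces `Re(conj φₜ(a) φₜ(b))` below any number exceeding the maximum once `t` is small.
-/

open scoped ComplexOrder

variable {A : Type*} [CStarAlgebra A]


lemma norm_add_algebraMap_I_sq_le [Nontrivial A] {x : A} (hx : IsSelfAdjoint x) (n : ℝ) :
    ‖x + algebraMap ℂ A (n * Complex.I)‖ ^ 2 ≤ ‖x‖ ^ 2 + n ^ 2 := by
  set c := algebraMap ℂ A (n * Complex.I)
  have hc : star c = -c := by
    rw [← algebraMap_star_comm, ← map_neg]
    simp [Complex.conj_ofReal]
  have hcc : c * c = -algebraMap ℂ A ((n : ℂ) ^ 2) := by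
    rw [← map_mul, ← map_neg]; congr 1; ring_nf; simp [Complex.I_sq]
  have hprod : star (x + c) * (x + c) = x * x + algebraMap ℂ A ((n : ℂ) ^ 2) := by
    rw [star_add, hx.star_eq, hc, ← sub_eq_add_neg,
      ← (Algebra.commute_algebraMap_right _ x).mul_self_sub_mul_self_eq', hcc, sub_neg_eq_add]
  calc ‖x + c‖ ^ 2 = ‖x * x + algebraMap ℂ A ((n : ℂ) ^ 2)‖ := by
        rw [← hprod, CStarRing.norm_star_mul_self, sq]
    _ ≤ ‖x * x‖ + ‖algebraMap ℂ A ((n : ℂ) ^ 2)‖ := norm_add_le _ _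
    _ = ‖x‖ ^ 2 + n ^ 2 := by
        rw [norm_algebraMap', hx.norm_mul_self]
        simp [sq]

lemma im_eq_zero_of_isSelfAdjoint (φ : A →L[ℂ] ℂ) (h1 : φ 1 = 1) (hφ : ‖φ‖ ≤ 1) {x : A}
    (hx : IsSelfAdjoint x) : (φ x).im = 0 := by
  have : Nontrivial A := ⟨1, 0, fun h => by simp [h] at h1⟩
  have key (n : ℝ) : (φ x).re ^ 2 + ((φ x).im + n) ^ 2 ≤ ‖x‖ ^ 2 + n ^ 2 := by
    have hφx : φ (x + algebraMap ℂ A (n * Complex.I)) = φ x + n * Complex.I := by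
      rw [map_add, Algebra.algebraMap_eq_smul_one, map_smul, h1, smul_eq_mul, mul_one]
    calc (φ x).re ^ 2 + ((φ x).im + n) ^ 2 = ‖φ (x + algebraMap ℂ A (n * Complex.I))‖ ^ 2 := by
          rw [hφx, Complex.sq_norm, Complex.normSq_apply]
          simp only [Complex.add_re, Complex.add_im, Complex.mul_re, Complex.mul_im,
            Complex.ofReal_re, Complex.ofReal_im, Complex.I_re, Complex.I_im]
          ring
      _ ≤ ‖x + algebraMap ℂ A (n * Complex.I)‖ ^ 2 := by
          gcongr; exact φ.le_of_opNorm_le hφ _ |>.trans_eq (one_mul _)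
      _ ≤ ‖x‖ ^ 2 + n ^ 2 := norm_add_algebraMap_I_sq_le hx n
  by_contra him
  -- n = ‖x‖² / Im φ(x) makes the left side exceed the right.
  have hkey := key (‖x‖ ^ 2 / (φ x).im)
  have hcancel : (φ x).im * (‖x‖ ^ 2 / (φ x).im) = ‖x‖ ^ 2 := mul_div_cancel₀ _ him
  nlinarith [sq_nonneg (φ x).re, sq_nonneg (φ x).im, sq_pos_of_ne_zero him]

lemma isState_of_map_one_of_norm_le_one (φ : A →L[ℂ] ℂ) (h1 : φ 1 = 1) (hφ : ‖φ‖ ≤ 1) :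
    IsState A φ := by
  have : Nontrivial A := ⟨1, 0, fun h => by simp [h] at h1⟩
  let _ := CStarAlgebra.spectralOrder A
  let _ := CStarAlgebra.spectralOrderedRing A
  have hnorm : ‖φ‖ = 1 :=
    hφ.antisymm (by simpa [h1] using φ.le_opNorm 1)
  refine ⟨fun c => ?_, h1, hnorm⟩
  set x := star c * c
  have hx : 0 ≤ x := star_mul_self_nonneg c
  have hsub : ‖algebraMap ℝ A ‖x‖ - x‖ ≤ ‖x‖ :=
    ((CStarAlgebra.mem_Icc_algebraMap_iff_norm_le (norm_nonneg x)).1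
      ⟨sub_nonneg.2 (IsSelfAdjoint.of_nonneg hx).le_algebraMap_norm_self, sub_le_self _ hx⟩).2
  have hφsub : φ (algebraMap ℝ A ‖x‖ - x) = ‖x‖ - φ x := by
    simp [Algebra.algebraMap_eq_smul_one, h1]
  have hdisk : ‖(‖x‖ : ℂ) - φ x‖ ≤ ‖x‖ :=
    hφsub ▸ (φ.le_of_opNorm_le hφ _).trans (by simpa using hsub)
  have him := im_eq_zero_of_isSelfAdjoint φ h1 hφ (IsSelfAdjoint.of_nonneg hx)
  have hre := (Complex.abs_re_le_norm _).trans hdisk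
  simp only [Complex.sub_re, Complex.ofReal_re] at hre
  exact Complex.le_def.2 ⟨by rw [Complex.zero_re]; linarith [(abs_le.1 hre).2], by simp [him]⟩

lemma exists_isState [Nontrivial A] : ∃ φ : A →L[ℂ] ℂ, IsState A φ := by
  obtain ⟨φ, hφ, hφ1⟩ := exists_dual_vector ℂ (1 : A) (by simp)
  exact ⟨φ, isState_of_map_one_of_norm_le_one φ (by simp [hφ1]) hφ.le⟩

lemma IsState.norm_apply_le_s11 {φ : A →L[ℂ] ℂ} (hφ : IsState A φ) (x : A) : ‖φ x‖ ≤ ‖x‖ :=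
  φ.le_of_opNorm_le hφ.2.2.le x |>.trans_eq (one_mul _)

def stateSpace (A : Type*) [CStarAlgebra A] : Set (WeakDual ℂ A) :=
  {φ | IsState A (WeakDual.toStrongDual φ)}

lemma isCompact_stateSpace : IsCompact (stateSpace A) := by
  have : stateSpace A =
      WeakDual.toStrongDual ⁻¹' Metric.closedBall 0 1 ∩ {φ | φ 1 = 1} := by
    ext φ
    simp only [stateSpace, Set.mem_ofPred_eq, Set.mem_inter_iff, Set.mem_preimage,
      mem_closedBall_zero_iff]
    exact ⟨fun hφ => ⟨hφ.2.2.le, hφ.2.1⟩,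
      fun hφ => isState_of_map_one_of_norm_le_one _ hφ.2 hφ.1⟩
  rw [this]
  exact (WeakDual.isCompact_closedBall 0 1).inter_right
    (isClosed_eq (WeakDual.eval_continuous 1) continuous_const)

lemma nr_eq_sSup_image (x : A) :
    nr x = sSup ((fun φ : WeakDual ℂ A => ‖φ x‖) '' stateSpace A) := by
  rw [nr]
  congr 1
  ext r
  exact ⟨fun ⟨φ, hφ, hr⟩ => ⟨StrongDual.toWeakDual φ, hφ, hr.symm⟩,
    fun ⟨φ, hφ, hr⟩ => ⟨WeakDual.toStrongDual φ, hφ, hr.symm⟩⟩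

lemma exists_mem_stateSpace_norm_apply_eq_nr [Nontrivial A] (x : A) :
    ∃ φ ∈ stateSpace A, ‖φ x‖ = nr x := by
  obtain ⟨φ, hφ⟩ := exists_isState (A := A)
  have hcompact : IsCompact ((fun φ : WeakDual ℂ A => ‖φ x‖) '' stateSpace A) :=
    isCompact_stateSpace.image (continuous_norm.comp (WeakDual.eval_continuous x))
  rw [nr_eq_sSup_image]
  exact hcompact.sSup_mem ⟨_, StrongDual.toWeakDual φ, hφ, rfl⟩

lemma nr_nonneg (x : A) : 0 ≤ nr x :=
  Real.sSup_nonneg fun _ ⟨_, _, hr⟩ => hr ▸ norm_nonneg _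

lemma nr_le_nr_add_norm_sub (x y : A) : nr x ≤ nr y + ‖x - y‖ := by
  refine Real.sSup_le (fun r ⟨φ, hφ, hr⟩ => ?_) (add_nonneg (nr_nonneg y) (norm_nonneg _))
  calc r = ‖φ y + φ (x - y)‖ := by rw [hr, ← map_add, add_sub_cancel]
    _ ≤ nr y + ‖x - y‖ := (norm_add_le _ _).trans
        (add_le_add (norm_apply_le_nr hφ y) (hφ.norm_apply_le_s11 _))

lemma IsCompact.exists_pos_forall_lt_of_eq_max {X : Type*} [TopologicalSpace X] {S : Set X}
    (hS : IsCompact S) {f g : X → ℝ} (hf : Continuous f) (hg : Continuous g) {m u : ℝ}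
    (hfm : ∀ x ∈ S, f x ≤ m) (hgu : ∀ x ∈ S, f x = m → g x < u) :
    ∃ θ > 0, ∀ x ∈ S, m - θ < f x → g x < u := by
  set K := S ∩ {x | u ≤ g x}
  obtain ⟨m', hm', hK⟩ : ∃ m' < m, ∀ x ∈ K, f x ≤ m' := by
    rcases K.eq_empty_or_nonempty with hK | hK
    · exact ⟨m - 1, by linarith, by simp [hK]⟩
    obtain ⟨y, hyK, hy⟩ := (hS.inter_right (isClosed_le continuous_const hg)).exists_isMaxOn
      hK hf.continuousOn
    refine ⟨f y, (hfm y hyK.1).lt_of_ne fun hym => ?_, fun x hx => hy hx⟩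
    exact (hgu y hyK.1 hym).not_ge hyK.2
  refine ⟨m - m', by linarith, fun x hx hfx => ?_⟩
  by_contra! hux
  linarith [hK x ⟨hx, hux⟩]

lemma Complex.norm_add_ofReal_mul_sq (z w : ℂ) (t : ℝ) :
    ‖z + t * w‖ ^ 2 = ‖z‖ ^ 2 + 2 * t * (starRingEnd ℂ z * w).re + t ^ 2 * ‖w‖ ^ 2 := by
  simp only [Complex.sq_norm, Complex.normSq_apply, Complex.add_re, Complex.add_im,
    Complex.mul_re, Complex.mul_im, Complex.ofReal_re, Complex.ofReal_im, Complex.conj_re,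
    Complex.conj_im]
  ring

lemma sq_norm_apply_add_smul (φ : A →L[ℂ] ℂ) (a b : A) (t : ℝ) :
    ‖φ (a + (t : ℂ) • b)‖ ^ 2 =
      ‖φ a‖ ^ 2 + 2 * t * (starRingEnd ℂ (φ a) * φ b).re + t ^ 2 * ‖φ b‖ ^ 2 := by
  rw [map_add, map_smul, smul_eq_mul, Complex.norm_add_ofReal_mul_sq]

section DifferenceQuotient

variable {a b : A} {φ : A →L[ℂ] ℂ} {t : ℝ}

lemma re_conj_mul_le_nr_quotient (hφ : IsState A φ) (hφa : ‖φ a‖ = nr a) (ht : 0 < t) :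
    (starRingEnd ℂ (φ a) * φ b).re ≤ (nr (a + (t : ℂ) • b) ^ 2 - nr a ^ 2) / (2 * t) := by
  rw [le_div_iff₀ (by positivity)]
  have h1 := pow_le_pow_left₀ (norm_nonneg _) (norm_apply_le_nr hφ (a + (t : ℂ) • b)) 2
  have h2 := sq_norm_apply_add_smul φ a b t
  rw [hφa] at h2
  nlinarith [sq_nonneg (t * ‖φ b‖)]

lemma nr_quotient_le_re_conj_mul (hφ : IsState A φ)
    (hab : ‖φ (a + (t : ℂ) • b)‖ = nr (a + (t : ℂ) • b)) (ht : 0 < t) :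
    (nr (a + (t : ℂ) • b) ^ 2 - nr a ^ 2) / (2 * t) ≤
      (starRingEnd ℂ (φ a) * φ b).re + t * ‖b‖ ^ 2 / 2 := by
  rw [div_le_iff₀ (by positivity)]
  have h1 := pow_le_pow_left₀ (norm_nonneg _) (norm_apply_le_nr hφ a) 2
  have h2 := pow_le_pow_left₀ (norm_nonneg _) (hφ.norm_apply_le_s11 b) 2
  have h3 := sq_norm_apply_add_smul φ a b t
  rw [hab] at h3
  nlinarith [mul_le_mul_of_nonneg_left h2 (sq_nonneg t)]

lemma nr_sub_le_norm_apply (hφ : IsState A φ)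
    (hab : ‖φ (a + (t : ℂ) • b)‖ = nr (a + (t : ℂ) • b)) :
    nr a - 2 * (|t| * ‖b‖) ≤ ‖φ a‖ := by
  have hnorm : ‖(t : ℂ) • b‖ = |t| * ‖b‖ := by simp [norm_smul]
  have h1 := nr_le_nr_add_norm_sub a (a + (t : ℂ) • b)
  have h2 : ‖φ (a + (t : ℂ) • b)‖ ≤ ‖φ a‖ + ‖(t : ℂ) • b‖ := by
    rw [map_add]
    exact (norm_add_le _ _).trans (add_le_add_right (hφ.norm_apply_le_s11 _) _)
  rw [sub_add_cancel_left, norm_neg, hnorm] at h1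
  linarith

end DifferenceQuotient

open Filter Topology

lemma continuous_re_conj_apply_mul_apply (a b : A) :
    Continuous fun ψ : WeakDual ℂ A => (starRingEnd ℂ (ψ a) * ψ b).re :=
  Complex.continuous_re.comp
    ((Complex.continuous_conj.comp (WeakDual.eval_continuous a)).mul (WeakDual.eval_continuous b))

lemma eventually_nr_quotient_lt [Nontrivial A] (a b : A) {c u : ℝ}
    (hc : ∀ ψ ∈ stateSpace A, ‖ψ a‖ = nr a → (starRingEnd ℂ (ψ a) * ψ b).re ≤ c)
    (hu : c < u) :
    ∀ᶠ t : ℝ in 𝓝[>] 0, (nr (a + (t : ℂ) • b) ^ 2 - nr a ^ 2) / (2 * t) < u := by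
  obtain ⟨θ, hθ, hnear⟩ := isCompact_stateSpace.exists_pos_forall_lt_of_eq_max
    (f := fun ψ : WeakDual ℂ A => ‖ψ a‖) (u := (c + u) / 2)
    (continuous_norm.comp (WeakDual.eval_continuous a)) (continuous_re_conj_apply_mul_apply a b)
    (fun ψ hψ => norm_apply_le_nr hψ a) (fun ψ hψ hψa => (hc ψ hψ hψa).trans_lt (by linarith))
  have hsmall (K ε : ℝ) (hε : 0 < ε) : ∀ᶠ t : ℝ in 𝓝[>] 0, t * K < ε :=
    ((Continuous.tendsto' (by fun_prop) 0 0 (zero_mul K)).mono_left nhdsWithin_le_nhds).eventually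
      (gt_mem_nhds hε)
  filter_upwards [self_mem_nhdsWithin, hsmall (2 * ‖b‖) θ hθ,
    hsmall (‖b‖ ^ 2) (u - c) (by linarith)] with t (ht : 0 < t) htθ htu
  obtain ⟨ψ, hψ, hψab⟩ := exists_mem_stateSpace_norm_apply_eq_nr (a + (t : ℂ) • b)
  have hψa : nr a - 2 * (|t| * ‖b‖) ≤ ‖ψ a‖ := nr_sub_le_norm_apply hψ hψab
  rw [abs_of_pos ht] at hψa
  have hψg : (starRingEnd ℂ (ψ a) * ψ b).re < (c + u) / 2 := hnear ψ hψ (by linarith)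
  have hquot : (nr (a + (t : ℂ) • b) ^ 2 - nr a ^ 2) / (2 * t) ≤
      (starRingEnd ℂ (ψ a) * ψ b).re + t * ‖b‖ ^ 2 / 2 :=
    nr_quotient_le_re_conj_mul hψ hψab ht
  linarith

theorem stmt11_general (a b : A) (ha : a ≠ 0) :
    ∃ φ : A →L[ℂ] ℂ, IsState A φ ∧ ‖φ a‖ = nr a ∧
      (∀ ψ : A →L[ℂ] ℂ, IsState A ψ → ‖ψ a‖ = nr a →
        ((starRingEnd ℂ) (ψ a) * ψ b).re ≤ ((starRingEnd ℂ) (φ a) * φ b).re) ∧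
      Filter.Tendsto (fun t : ℝ => (nr (a + (t : ℂ) • b) ^ 2 - nr a ^ 2) / (2 * t))
        (nhdsWithin 0 (Set.Ioi 0)) (nhds (((starRingEnd ℂ) (φ a) * φ b).re)) := by
  have : Nontrivial A := ⟨a, 0, ha⟩
  have hM : IsCompact (stateSpace A ∩ {φ | ‖φ a‖ = nr a}) := isCompact_stateSpace.inter_right
    (isClosed_eq (continuous_norm.comp (WeakDual.eval_continuous a)) continuous_const)
  obtain ⟨φ, ⟨hφ, hφa⟩, hmax⟩ := hM.exists_isMaxOn
    (exists_mem_stateSpace_norm_apply_eq_nr a)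
    (continuous_re_conj_apply_mul_apply a b).continuousOn
  refine ⟨WeakDual.toStrongDual φ, hφ, hφa, fun ψ hψ hψa => hmax ⟨hψ, hψa⟩, ?_⟩
  refine tendsto_order.2 ⟨fun l hl => ?_, fun u hu =>
    eventually_nr_quotient_lt a b (fun ψ hψ hψa => hmax ⟨hψ, hψa⟩) hu⟩
  filter_upwards [self_mem_nhdsWithin] with t (ht : 0 < t)
  exact hl.trans_le (re_conj_mul_le_nr_quotient hφ hφa ht)

theorem stmt11 (a b : A) (ha : a ≠ 0) (hb : b ≠ 0) :
    ∃ φ : A →L[ℂ] ℂ, IsState A φ ∧ ‖φ a‖ = nr a ∧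
      (∀ ψ : A →L[ℂ] ℂ, IsState A ψ → ‖ψ a‖ = nr a →
        ((starRingEnd ℂ) (ψ a) * ψ b).re ≤ ((starRingEnd ℂ) (φ a) * φ b).re) ∧
      Filter.Tendsto (fun t : ℝ => (nr (a + (t : ℂ) • b) ^ 2 - nr a ^ 2) / (2 * t))
        (nhdsWithin 0 (Set.Ioi 0)) (nhds (((starRingEnd ℂ) (φ a) * φ b).re)) :=
  stmt11_general a b ha
end
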